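/- Let Σ be a p×p positive definite correlation matrix, let q ≥ 2 be an integer with q ≤ p, let λ ∈ (0,1] be such that every q×q principal submatrix of Σ has smallest eigenvalue at least λ, and let c ∈ (0,1]. Set ε = cλ²/((4+c)q + λcq). If Σ̂ is a real symmetric p×p matrix with ‖Σ̂ − Σ‖_∞ < ε, then for every pair of distinct indices u, v and every subset S of the remaining indices with |S| ≤ q − 2, the principal submatrix Σ̂_{I,I} with I = {u,v} ∪ S is invertible and the partial correlations satisfy |ρ̂_{uv|S} − ρ_{uv|S}| < c/2, where ρ_{uv|S} is computed from Σ and ρ̂_{uv|S} is computed from Σ̂. -/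

import Mathlib

open Matrix Finset

/-- Entrywise maximum norm of a square real matrix. -/
noncomputable def supNorm {p : ℕ} (A : Matrix (Fin p) (Fin p) ℝ) : ℝ :=
  ⨆ i, ⨆ j, |A i j|

/-- The principal submatrix `M_{I,I}` of a matrix, indexed by a finite index set `I`. -/
def psub {p : ℕ} (M : Matrix (Fin p) (Fin p) ℝ) (I : Finset (Fin p)) :
    Matrix I I ℝ :=
  M.submatrix (fun i => (i : Fin p)) (fun i => (i : Fin p))

/-- The partial correlation `ρ_{uv|S} = -Ψ⁻¹_{uv} / √(Ψ⁻¹_{uu} Ψ⁻¹_{vv})`, where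
`Ψ = M_{I,I}` is the principal submatrix with `I = {u, v} ∪ S`. -/
noncomputable def pcorr {p : ℕ} (M : Matrix (Fin p) (Fin p) ℝ) (u v : Fin p)
    (S : Finset (Fin p)) : ℝ :=
  let Psiinv := (psub M (insert u (insert v S)))⁻¹
  let ui : ↥(insert u (insert v S)) := ⟨u, Finset.mem_insert_self u _⟩
  let vi : ↥(insert u (insert v S)) :=
    ⟨v, Finset.mem_insert_of_mem (Finset.mem_insert_self v S)⟩
  (-(Psiinv ui vi)) / Real.sqrt (Psiinv ui ui * Psiinv vi vi)

/-!
Write `Ψ = Σ_{I,I}` and `E = Σ̂_{I,I} - Σ_{I,I}`. Every `q × q` principal submatrix of `Σ`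
dominates `λ • 1`, hence so does `Ψ`, being a principal submatrix of one of them. An entrywise
bound `ε` on `E` gives `|xᵀ E y| ≤ ε ‖x‖₁ ‖y‖₁ ≤ ε q ‖x‖₂ ‖y‖₂`, so `Ψ + E ≥ (λ - εq) • 1` is
positive definite. The rows and columns of `Ψ⁻¹` and `(Ψ + E)⁻¹` have Euclidean norm at most
`1 / λ` and `1 / (λ - εq)`, so the resolvent identity `(Ψ + E)⁻¹ - Ψ⁻¹ = -(Ψ + E)⁻¹ E Ψ⁻¹` bounds
every entry of the difference of the inverses by `δ = εq / ((λ - εq) λ)`, which is `c / (4 + c)`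
at the threshold. Since `Σ` has unit diagonal, Cauchy–Schwarz puts the diagonal of `Ψ⁻¹` above
`1`; so the normalisation `√(Ψ̂⁻¹_{uu} Ψ̂⁻¹_{vv})` is within a factor `1 ± δ` of the true one, and
the partial correlations differ by at most `2δ < c / 2`.
-/

namespace Matrix

variable {ι κ : Type*} [Fintype ι]

open scoped MatrixOrder in
theorem mul_dotProduct_le_submatrix_of_le_eigenvalues [DecidableEq ι] [Fintype κ] [DecidableEq κ]
    {A : Matrix κ κ ℝ} (hA : A.IsHermitian) {lam : ℝ} (h : ∀ i, lam ≤ hA.eigenvalues i)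
    {e : ι → κ} (he : Function.Injective e) (x : ι → ℝ) :
    lam * (x ⬝ᵥ x) ≤ x ⬝ᵥ A.submatrix e e *ᵥ x := by
  have hle : algebraMap ℝ _ lam ≤ A := by
    rw [algebraMap_le_iff_le_spectrum (a := A) hA.isSelfAdjoint,
      hA.spectrum_real_eq_range_eigenvalues]
    rintro _ ⟨i, rfl⟩
    exact h i
  have hsub : (A - algebraMap ℝ _ lam).submatrix e e = A.submatrix e e - lam • 1 := by
    rw [Algebra.algebraMap_eq_smul_one, ← submatrix_one _ he]
    rfl
  have hpsd := ((Matrix.le_iff.mp hle).submatrix e).dotProduct_mulVec_nonneg x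
  rw [hsub, sub_mulVec, dotProduct_sub, smul_mulVec, one_mulVec, dotProduct_smul,
    smul_eq_mul] at hpsd
  simpa using hpsd

theorem posDef_of_forall_mul_dotProduct_le {Ψ : Matrix ι ι ℝ} {lam : ℝ} (hΨ : Ψ.IsHermitian)
    (hlam : 0 < lam) (h : ∀ x, lam * (x ⬝ᵥ x) ≤ x ⬝ᵥ Ψ *ᵥ x) : Ψ.PosDef := by
  refine .of_dotProduct_mulVec_pos hΨ fun x hx => ?_
  have hxx : 0 < x ⬝ᵥ x := by simpa using dotProduct_self_star_pos_iff.mpr hx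
  simpa using (mul_pos hlam hxx).trans_le (h x)

theorem sq_sum_abs_le_card_mul_dotProduct (x : ι → ℝ) :
    (∑ i, |x i|) ^ 2 ≤ Fintype.card ι * (x ⬝ᵥ x) := by
  simpa [dotProduct, ← sq] using sq_sum_le_card_mul_sum_sq (s := univ) (f := fun i => |x i|)

theorem abs_dotProduct_mulVec_le {E : Matrix ι ι ℝ} {ε : ℝ} (hE : ∀ i j, |E i j| ≤ ε)
    (x y : ι → ℝ) : |x ⬝ᵥ E *ᵥ y| ≤ ε * ((∑ i, |x i|) * ∑ j, |y j|) := by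
  rw [sum_mul_sum, mul_sum]
  simp only [dotProduct, mulVec, mul_sum]
  refine (abs_sum_le_sum_abs _ _).trans (sum_le_sum fun i _ => ?_)
  refine (abs_sum_le_sum_abs _ _).trans (sum_le_sum fun j _ => ?_)
  rw [abs_mul, abs_mul, mul_left_comm]
  exact mul_le_mul_of_nonneg_right (hE i j) (by positivity)

theorem forall_mul_dotProduct_le_add {Ψ E : Matrix ι ι ℝ} {lam ε M : ℝ}
    (hΨ : ∀ x, lam * (x ⬝ᵥ x) ≤ x ⬝ᵥ Ψ *ᵥ x) (hE : ∀ i j, |E i j| ≤ ε) (hε : 0 ≤ ε)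
    (hM : (Fintype.card ι : ℝ) ≤ M) (x : ι → ℝ) :
    (lam - ε * M) * (x ⬝ᵥ x) ≤ x ⬝ᵥ (Ψ + E) *ᵥ x := by
  have hEx := neg_le_of_abs_le ((abs_dotProduct_mulVec_le hE x x).trans
    (mul_le_mul_of_nonneg_left ((sq _).symm.trans_le (sq_sum_abs_le_card_mul_dotProduct x)) hε))
  have hxx : 0 ≤ x ⬝ᵥ x := sum_nonneg fun i _ => mul_self_nonneg (x i)
  rw [add_mulVec, dotProduct_add]
  nlinarith [hΨ x, mul_le_mul_of_nonneg_right hM hxx]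

theorem sq_mul_dotProduct_col_inv_le [DecidableEq ι] {Ψ : Matrix ι ι ℝ} {lam : ℝ}
    (hlam : 0 ≤ lam) (hΨ : ∀ x, lam * (x ⬝ᵥ x) ≤ x ⬝ᵥ Ψ *ᵥ x) (hdet : IsUnit Ψ.det) (j : ι) :
    lam ^ 2 * (Ψ⁻¹.col j ⬝ᵥ Ψ⁻¹.col j) ≤ 1 := by
  set x := Ψ⁻¹.col j with hx_def
  have hΨx : Ψ *ᵥ x = Pi.single j 1 := by
    rw [hx_def, ← mulVec_single_one, mulVec_mulVec, mul_nonsing_inv _ hdet, one_mulVec]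
  have hx : lam * (x ⬝ᵥ x) ≤ x j := by simpa [hΨx] using hΨ x
  have hxj : x j ^ 2 ≤ x ⬝ᵥ x :=
    (sq (x j)).trans_le (single_le_sum (fun i _ => mul_self_nonneg (x i)) (mem_univ j))
  have hxx : 0 ≤ x ⬝ᵥ x := sum_nonneg fun i _ => mul_self_nonneg (x i)
  rcases hxx.eq_or_lt with h0 | hpos
  · simp [← h0]
  · have := mul_le_mul hx hx (by positivity) (hx.trans' (by positivity))
    nlinarith

theorem sq_mul_sq_sum_abs_col_inv_le [DecidableEq ι] {Ψ : Matrix ι ι ℝ} {lam : ℝ}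
    (hlam : 0 ≤ lam) (hΨ : ∀ x, lam * (x ⬝ᵥ x) ≤ x ⬝ᵥ Ψ *ᵥ x) (hdet : IsUnit Ψ.det) (j : ι) :
    lam ^ 2 * (∑ k, |Ψ⁻¹ k j|) ^ 2 ≤ Fintype.card ι := by
  have := mul_le_mul_of_nonneg_left (sq_sum_abs_le_card_mul_dotProduct (Ψ⁻¹.col j))
    (sq_nonneg lam)
  simp only [col_apply] at this
  nlinarith [sq_mul_dotProduct_col_inv_le hlam hΨ hdet j, (Fintype.card ι).cast_nonneg (α := ℝ)]

theorem sq_mul_sq_sum_abs_row_inv_le [DecidableEq ι] {Ψ : Matrix ι ι ℝ} {lam : ℝ}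
    (hlam : 0 ≤ lam) (hΨ : ∀ x, lam * (x ⬝ᵥ x) ≤ x ⬝ᵥ Ψ *ᵥ x) (hdet : IsUnit Ψ.det) (i : ι) :
    lam ^ 2 * (∑ k, |Ψ⁻¹ i k|) ^ 2 ≤ Fintype.card ι := by
  have hΨt : ∀ x, lam * (x ⬝ᵥ x) ≤ x ⬝ᵥ Ψᵀ *ᵥ x := fun x => by
    rw [mulVec_transpose, dotProduct_comm x (x ᵥ* Ψ), ← dotProduct_mulVec]; exact hΨ x
  simpa [← transpose_nonsing_inv] using
    sq_mul_sq_sum_abs_col_inv_le hlam hΨt (by rwa [det_transpose]) i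

theorem abs_inv_add_apply_sub_inv_apply_le [DecidableEq ι] {Ψ E : Matrix ι ι ℝ}
    {lam ε M : ℝ} (hΨh : Ψ.IsHermitian) (hEh : E.IsHermitian) (hlam : 0 < lam)
    (hΨ : ∀ x, lam * (x ⬝ᵥ x) ≤ x ⬝ᵥ Ψ *ᵥ x) (hE : ∀ i j, |E i j| ≤ ε) (hε : 0 ≤ ε)
    (hM : (Fintype.card ι : ℝ) ≤ M) (hsmall : ε * M < lam) (i j : ι) :
    |(Ψ + E)⁻¹ i j - Ψ⁻¹ i j| ≤ ε * M / ((lam - ε * M) * lam) := by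
  have hlam' : 0 < lam - ε * M := sub_pos.mpr hsmall
  have hΨE := forall_mul_dotProduct_le_add hΨ hE hε hM
  have hdet := (posDef_of_forall_mul_dotProduct_le hΨh hlam hΨ).isUnit
  have hdet' := (posDef_of_forall_mul_dotProduct_le (hΨh.add hEh) hlam' hΨE).isUnit
  rw [isUnit_iff_isUnit_det] at hdet hdet'
  have hdiff : (Ψ + E)⁻¹ - Ψ⁻¹ = (Ψ + E)⁻¹ * (-E) * Ψ⁻¹ := by
    simp only [nonsing_inv_eq_ringInverse]
    rw [Ring.inverse_sub_inverse (iff_of_true ((isUnit_iff_isUnit_det _).mpr hdet')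
      ((isUnit_iff_isUnit_det _).mpr hdet)), sub_add_cancel_left]
  set r := ∑ k, |(Ψ + E)⁻¹ i k|
  set c := ∑ k, |Ψ⁻¹ k j|
  have hr := (sq_mul_sq_sum_abs_row_inv_le hlam'.le hΨE hdet' i).trans hM
  have hc := (sq_mul_sq_sum_abs_col_inv_le hlam.le hΨ hdet j).trans hM
  have hrc : (lam - ε * M) * lam * (r * c) ≤ M := by
    have hM0 : 0 ≤ M := (Nat.cast_nonneg _).trans hM
    refine (pow_le_pow_iff_left₀ (by positivity) hM0 two_ne_zero).mp ?_
    calc ((lam - ε * M) * lam * (r * c)) ^ 2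
        = ((lam - ε * M) ^ 2 * r ^ 2) * (lam ^ 2 * c ^ 2) := by ring
      _ ≤ M * M := mul_le_mul hr hc (by positivity) hM0
      _ = M ^ 2 := (sq M).symm
  have hentry : ((Ψ + E)⁻¹ * (-E) * Ψ⁻¹) i j
      = -((fun k => (Ψ + E)⁻¹ i k) ⬝ᵥ E *ᵥ fun k => Ψ⁻¹ k j) := by
    rw [Matrix.mul_neg, Matrix.neg_mul, neg_apply, Matrix.mul_assoc]
    rfl
  rw [← sub_apply, hdiff, hentry, abs_neg, le_div_iff₀ (by positivity)]
  calc |(fun k => (Ψ + E)⁻¹ i k) ⬝ᵥ E *ᵥ fun k => Ψ⁻¹ k j| * ((lam - ε * M) * lam)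
      ≤ ε * (r * c) * ((lam - ε * M) * lam) := by
        gcongr
        exact abs_dotProduct_mulVec_le hE _ _
    _ = ε * ((lam - ε * M) * lam * (r * c)) := by ring
    _ ≤ ε * M := by gcongr

theorem PosSemidef.sq_dotProduct_mulVec_le {A : Matrix ι ι ℝ} (hA : A.PosSemidef)
    (x y : ι → ℝ) : (x ⬝ᵥ A *ᵥ y) ^ 2 ≤ (x ⬝ᵥ A *ᵥ x) * (y ⬝ᵥ A *ᵥ y) := by
  classical
  have hsymm : y ⬝ᵥ A *ᵥ x = x ⬝ᵥ A *ᵥ y := by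
    rw [dotProduct_mulVec, ← mulVec_transpose, dotProduct_comm,
      show Aᵀ = A from hA.isHermitian]
  simpa [toBilin'_apply', hsymm, ← sq] using
    (toBilin' A).apply_mul_apply_le_of_forall_zero_le
      (fun z => by simpa [toBilin'_apply'] using hA.dotProduct_mulVec_nonneg z) x y

theorem PosSemidef.sq_apply_le_apply_mul_apply [DecidableEq ι] {A : Matrix ι ι ℝ}
    (hA : A.PosSemidef) (u v : ι) : A u v ^ 2 ≤ A u u * A v v := by
  simpa using hA.sq_dotProduct_mulVec_le (Pi.single u 1) (Pi.single v 1)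

theorem PosSemidef.one_le_apply_mul_inv_apply [DecidableEq ι] {A : Matrix ι ι ℝ}
    (hA : A.PosSemidef) (hdet : IsUnit A.det) (u : ι) : 1 ≤ A u u * A⁻¹ u u := by
  have hAy : A *ᵥ (A⁻¹ *ᵥ Pi.single u 1) = Pi.single u 1 := by
    rw [mulVec_mulVec, mul_nonsing_inv _ hdet, one_mulVec]
  have h := hA.sq_dotProduct_mulVec_le (Pi.single u 1) (A⁻¹ *ᵥ Pi.single u 1)
  rw [hAy] at h
  simpa [dotProduct_comm _ (Pi.single u 1)] using h

end Matrix

theorem abs_sqrt_mul_sub_sqrt_mul_le {b d b' d' δ : ℝ} (hb : 1 ≤ b) (hd : 1 ≤ d)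
    (hδ : δ ≤ 1) (hbb : |b' - b| ≤ δ) (hdd : |d' - d| ≤ δ) :
    |√(b' * d') - √(b * d)| ≤ δ * √(b * d) := by
  obtain ⟨hb₁, hb₂⟩ := abs_le.mp hbb
  obtain ⟨hd₁, hd₂⟩ := abs_le.mp hdd
  have hδ0 : 0 ≤ δ := (abs_nonneg _).trans hbb
  have hlo : ((1 - δ) * √(b * d)) ^ 2 ≤ b' * d' := by
    rw [mul_pow, Real.sq_sqrt (by positivity)]
    calc (1 - δ) ^ 2 * (b * d) = ((1 - δ) * b) * ((1 - δ) * d) := by ring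
      _ ≤ b' * d' := mul_le_mul (by nlinarith) (by nlinarith) (by nlinarith) (by linarith)
  have hhi : b' * d' ≤ ((1 + δ) * √(b * d)) ^ 2 := by
    rw [mul_pow, Real.sq_sqrt (by positivity)]
    calc b' * d' ≤ ((1 + δ) * b) * ((1 + δ) * d) :=
          mul_le_mul (by nlinarith) (by nlinarith) (by linarith) (by positivity)
      _ = (1 + δ) ^ 2 * (b * d) := by ring
  rw [abs_sub_le_iff]
  constructor
  · have := Real.sqrt_le_sqrt hhi
    rw [Real.sqrt_sq (by positivity)] at this
    linarith
  · have := Real.sqrt_le_sqrt hlo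
    rw [Real.sqrt_sq (mul_nonneg (by linarith) (Real.sqrt_nonneg _))] at this
    linarith

theorem abs_div_sub_div_le {a a' s s' δ : ℝ} (hs : 1 ≤ s) (hs' : 0 < s') (ha' : |a'| ≤ s')
    (haa : |a' - a| ≤ δ) (hss : |s' - s| ≤ δ * s) : |a' / s' - a / s| ≤ 2 * δ := by
  have hs0 : 0 < s := by linarith
  have hδ : 0 ≤ δ := (abs_nonneg _).trans haa
  have hsplit : a' / s' - a / s = (a' - a) / s - a' / s' * ((s' - s) / s) := by
    field_simp
    ring
  have h₁ : |(a' - a) / s| ≤ δ := by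
    rw [abs_div, abs_of_pos hs0, div_le_iff₀ hs0]
    nlinarith
  have h₂ : |a' / s' * ((s' - s) / s)| ≤ δ := by
    rw [abs_mul, abs_div, abs_div, abs_of_pos hs0, abs_of_pos hs']
    calc |a'| / s' * (|s' - s| / s) ≤ 1 * δ := by
          gcongr
          · exact div_le_one_of_le₀ ha' hs'.le
          · rwa [div_le_iff₀ hs0]
      _ = δ := one_mul δ
  rw [hsplit]
  linarith [abs_sub (((a' - a) / s)) (a' / s' * ((s' - s) / s))]

noncomputable def errorThreshold (lam c q : ℝ) : ℝ := c * lam ^ 2 / ((4 + c) * q + lam * c * q)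

section ErrorThreshold
variable {lam c q : ℝ}

theorem errorThreshold_mul (hlam : 0 < lam) (hc : 0 < c) (hq : 0 < q) :
    errorThreshold lam c q * q = c * lam ^ 2 / (4 + c + lam * c) := by
  have : 0 < 4 + c + lam * c := by positivity
  unfold errorThreshold
  field_simp

theorem errorThreshold_mul_lt (hlam : 0 < lam) (hc : 0 < c) (hq : 0 < q) :
    errorThreshold lam c q * q < lam := by
  rw [errorThreshold_mul hlam hc hq, div_lt_iff₀ (by positivity)]
  nlinarith [mul_pos hlam hlam]

theorem errorThreshold_mul_div_eq (hlam : 0 < lam) (hc : 0 < c) (hq : 0 < q) :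
    errorThreshold lam c q * q / ((lam - errorThreshold lam c q * q) * lam) = c / (4 + c) := by
  have hD : 0 < 4 + c + lam * c := by positivity
  have h4 : 0 < 4 + c := by positivity
  have hsub : lam - c * lam ^ 2 / (4 + c + lam * c) = lam * (4 + c) / (4 + c + lam * c) := by
    field_simp
    ring
  rw [errorThreshold_mul hlam hc hq, hsub]
  field_simp

end ErrorThreshold

theorem abs_apply_le_supNorm {p : ℕ} (A : Matrix (Fin p) (Fin p) ℝ) (i j : Fin p) :
    |A i j| ≤ supNorm A :=
  (le_ciSup (Set.finite_range _).bddAbove j).trans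
    (le_ciSup (f := fun i => ⨆ j, |A i j|) (Set.finite_range _).bddAbove i)

theorem mul_dotProduct_le_psub {p q : ℕ} {Sig : Matrix (Fin p) (Fin p) ℝ} (hSig : Sig.IsHermitian)
    (hqp : q ≤ p) {lam : ℝ}
    (hlam : ∀ I : Finset (Fin p), I.card = q →
      ∀ (h : (psub Sig I).IsHermitian) (i : I), lam ≤ h.eigenvalues i)
    {I : Finset (Fin p)} (hI : I.card ≤ q) (x : I → ℝ) :
    lam * (x ⬝ᵥ x) ≤ x ⬝ᵥ psub Sig I *ᵥ x := by
  obtain ⟨J, hIJ, -, hJ⟩ := exists_subsuperset_card_eq (subset_univ I) hI (by simpa using hqp)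
  have hSigJ : (psub Sig J).IsHermitian := hSig.submatrix _
  exact mul_dotProduct_le_submatrix_of_le_eigenvalues hSigJ (hlam J hJ hSigJ)
    (e := Set.inclusion hIJ) (Set.inclusion_injective hIJ) x

theorem abs_pcorr_sub_pcorr_le {p : ℕ} {M M' : Matrix (Fin p) (Fin p) ℝ} {u v : Fin p}
    {S : Finset (Fin p)} {δ : ℝ} (hM : (psub M (insert u (insert v S))).PosDef)
    (hMu : M u u = 1) (hMv : M v v = 1) (hM' : (psub M' (insert u (insert v S))).PosDef)
    (hclose : ∀ i j, |(psub M' (insert u (insert v S)))⁻¹ i j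
      - (psub M (insert u (insert v S)))⁻¹ i j| ≤ δ) (hδ : δ ≤ 1) :
    |pcorr M' u v S - pcorr M u v S| ≤ 2 * δ := by
  unfold pcorr
  set I := insert u (insert v S)
  set ui : I := ⟨u, mem_insert_self u _⟩
  set vi : I := ⟨v, mem_insert_of_mem (mem_insert_self v S)⟩
  have hdet := (isUnit_iff_isUnit_det _).mp hM.isUnit
  have hb : 1 ≤ (psub M I)⁻¹ ui ui := by
    simpa [psub, ui, hMu] using hM.posSemidef.one_le_apply_mul_inv_apply hdet ui
  have hd : 1 ≤ (psub M I)⁻¹ vi vi := by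
    simpa [psub, vi, hMv] using hM.posSemidef.one_le_apply_mul_inv_apply hdet vi
  have hs' : 0 < √((psub M' I)⁻¹ ui ui * (psub M' I)⁻¹ vi vi) :=
    Real.sqrt_pos.mpr (mul_pos hM'.inv.diag_pos hM'.inv.diag_pos)
  rw [neg_div, neg_div, neg_sub_neg, abs_sub_comm]
  exact abs_div_sub_div_le (Real.one_le_sqrt.mpr (one_le_mul_of_one_le_of_one_le hb hd)) hs'
    (Real.abs_le_sqrt (hM'.inv.posSemidef.sq_apply_le_apply_mul_apply ui vi)) (hclose ui vi)
    (abs_sqrt_mul_sub_sqrt_mul_le hb hd hδ (hclose ui ui) (hclose vi vi))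

theorem stmt4_general {p : ℕ} (Sig : Matrix (Fin p) (Fin p) ℝ) (hSig : Sig.PosDef)
    (hdiag : ∀ i, Sig i i = 1)
    (q : ℕ) (hq2 : 2 ≤ q) (hqp : q ≤ p)
    (lam : ℝ) (hlam0 : 0 < lam)
    (hlam : ∀ I : Finset (Fin p), I.card = q →
      ∀ (h : (psub Sig I).IsHermitian) (i : I), lam ≤ h.eigenvalues i)
    (c : ℝ) (hc0 : 0 < c)
    (Shat : Matrix (Fin p) (Fin p) ℝ) (hShat : Shat.IsSymm)
    (hE : supNorm (Shat - Sig) < c * lam ^ 2 / ((4 + c) * q + lam * c * q)) :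
    ∀ u v : Fin p, u ≠ v → ∀ S : Finset (Fin p), u ∉ S → v ∉ S → S.card ≤ q - 2 →
      IsUnit (psub Shat (insert u (insert v S))) ∧
        |pcorr Shat u v S - pcorr Sig u v S| < c / 2 := by
  intro u v _ S _ _ hS
  have hI : (insert u (insert v S)).card ≤ q := by
    have := (card_insert_le u (insert v S)).trans (Nat.succ_le_succ (card_insert_le v S))
    omega
  set I := insert u (insert v S)
  have hq : (0 : ℝ) < q := by exact_mod_cast (show 0 < q by omega)
  have hcard : (Fintype.card I : ℝ) ≤ q := by simpa using hI
  have hΨh : (psub Sig I).IsHermitian := hSig.isHermitian.submatrix _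
  have hΨ := mul_dotProduct_le_psub hSig.isHermitian hqp hlam hI
  have hEh : (psub (Shat - Sig) I).IsHermitian :=
    ((isHermitian_iff_isSymm.mpr hShat).sub hSig.isHermitian).submatrix _
  have hE' : ∀ i j, |psub (Shat - Sig) I i j| ≤ errorThreshold lam c q :=
    fun i j => (abs_apply_le_supNorm _ _ _).trans hE.le
  have hε : 0 ≤ errorThreshold lam c q := by unfold errorThreshold; positivity
  have hsmall := errorThreshold_mul_lt hlam0 hc0 hq
  have hsplit : psub Shat I = psub Sig I + psub (Shat - Sig) I := by ext; simp [psub]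
  have hpd : (psub Shat I).PosDef := hsplit ▸ posDef_of_forall_mul_dotProduct_le
    (hΨh.add hEh) (sub_pos.mpr hsmall) (forall_mul_dotProduct_le_add hΨ hE' hε hcard)
  have hδ := errorThreshold_mul_div_eq hlam0 hc0 hq
  refine ⟨hpd.isUnit, (abs_pcorr_sub_pcorr_le (hSig.submatrix Subtype.val_injective)
    (hdiag u) (hdiag v) hpd (hsplit ▸ abs_inv_add_apply_sub_inv_apply_le hΨh hEh hlam0 hΨ hE' hε
      hcard hsmall) ?_).trans_lt ?_⟩
  · rw [hδ, div_le_one (by positivity)]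
    linarith
  · rw [hδ, mul_div_assoc', div_lt_div_iff₀ (by positivity) two_pos]
    nlinarith [mul_pos hc0 hc0]

/-- Deterministic error propagation to partial correlations: if `Σ` is a `p × p`
positive definite correlation matrix, `2 ≤ q ≤ p`, every `q × q` principal
submatrix of `Σ` has smallest eigenvalue at least `λ ∈ (0,1]`, `c ∈ (0,1]`, and
`Σ̂` is symmetric with `‖Σ̂ - Σ‖_∞ < ε = cλ²/((4+c)q + λcq)`, then for all distinct
`u, v` and all `S ⊆ V \ {u,v}` with `|S| ≤ q - 2`, the principal submatrix
`Σ̂_{I,I}` with `I = {u,v} ∪ S` is invertible and `|ρ̂_{uv|S} - ρ_{uv|S}| < c/2`. -/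
theorem stmt4 {p : ℕ} (Sig : Matrix (Fin p) (Fin p) ℝ) (hSig : Sig.PosDef)
    (hdiag : ∀ i, Sig i i = 1)
    (q : ℕ) (hq2 : 2 ≤ q) (hqp : q ≤ p)
    (lam : ℝ) (hlam0 : 0 < lam) (hlam1 : lam ≤ 1)
    (hlam : ∀ I : Finset (Fin p), I.card = q →
      ∀ (h : (psub Sig I).IsHermitian) (i : I), lam ≤ h.eigenvalues i)
    (c : ℝ) (hc0 : 0 < c) (hc1 : c ≤ 1)
    (Shat : Matrix (Fin p) (Fin p) ℝ) (hShat : Shat.IsSymm)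
    (hE : supNorm (Shat - Sig) < c * lam ^ 2 / ((4 + c) * q + lam * c * q)) :
    ∀ u v : Fin p, u ≠ v → ∀ S : Finset (Fin p), u ∉ S → v ∉ S → S.card ≤ q - 2 →
      IsUnit (psub Shat (insert u (insert v S))) ∧
        |pcorr Shat u v S - pcorr Sig u v S| < c / 2 :=
  stmt4_general Sig hSig hdiag q hq2 hqp lam hlam0 hlam c hc0 Shat hShat hE
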